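/- Let W be the smallest nonnegative concave majorant of g̃ := (g/φ) ∘ s̃^{-1} on [s̃(l), s̃(r)], where s̃ = ψ/φ is continuous and strictly increasing. Then the value function of the optimal stopping problem with killing rate α satisfies V(x) = φ(x)·W(s̃(x)) for all x ∈ [l, r]. -/

import Mathlib

open Set

/-! Along the scale `s̃`, the `s̃`-concavity of `f/φ` on `[l, r]` is exactly the concavity of
`(f/φ) ∘ s̃⁻¹` on `[s̃(l), s̃(r)]`, because a continuous strictly increasing `s̃` maps `[l, r]`
order-isomorphically onto `[s̃(l), s̃(r)]`. Hence `U ↦ (U/φ) ∘ s̃⁻¹` is a bijection between the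
nonnegative majorants of `g` with `U/φ` `s̃`-concave and the nonnegative concave majorants of `g̃`,
and it preserves the pointwise order, so it sends the least element `V` to the least element `W`. -/

/-- `f/φ` is `s̃`-concave on `[l,r]`:
`(f/φ)(x) ≥ (f/φ)(l')·(s̃(r')−s̃(x))/(s̃(r')−s̃(l')) + (f/φ)(r')·(s̃(x)−s̃(l'))/(s̃(r')−s̃(l'))`
for all `l' ≤ x ≤ r'` in `[l,r]`. -/
def IsSTildeConcave (l r : ℝ) (stilde φ f : ℝ → ℝ) : Prop :=
  ∀ l' ∈ Set.Icc l r, ∀ x ∈ Set.Icc l r, ∀ r' ∈ Set.Icc l r,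
    l' ≤ x → x ≤ r' → l' < r' →
      (f l' / φ l') * ((stilde r' - stilde x) / (stilde r' - stilde l')) +
          (f r' / φ r') * ((stilde x - stilde l') / (stilde r' - stilde l'))
        ≤ f x / φ x

theorem concaveOn_iff_secant_le {𝕜 : Type*} [Field 𝕜] [LinearOrder 𝕜] [IsStrictOrderedRing 𝕜]
    {S : Set 𝕜} {f : 𝕜 → 𝕜} (hS : Convex 𝕜 S) :
    ConcaveOn 𝕜 S f ↔ ∀ a ∈ S, ∀ x ∈ S, ∀ b ∈ S, a ≤ x → x ≤ b → a < b →
      f a * ((b - x) / (b - a)) + f b * ((x - a) / (b - a)) ≤ f x := by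
  constructor
  · intro hf a ha x _ b hb hax hxb hab
    have hba : 0 < b - a := sub_pos.2 hab
    have key := hf.2 ha hb (div_nonneg (sub_nonneg.2 hxb) hba.le)
      (div_nonneg (sub_nonneg.2 hax) hba.le) (by field_simp; ring)
    have hx : (b - x) / (b - a) * a + (x - a) / (b - a) * b = x := by field_simp; ring
    simp only [smul_eq_mul, hx] at key
    linarith
  · intro hf
    refine LinearOrder.concaveOn_of_lt hS fun x hx y hy hxy μ ν hμ hν hμν => ?_
    simp only [smul_eq_mul]
    have hyx : y - x ≠ 0 := sub_ne_zero.2 hxy.ne'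
    have hμ' : (y - (μ * x + ν * y)) / (y - x) = μ := by
      rw [div_eq_iff hyx]; linear_combination (-y) * hμν
    have hν' : (μ * x + ν * y - x) / (y - x) = ν := by
      rw [div_eq_iff hyx]; linear_combination x * hμν
    have hm : μ * x + ν * y ∈ S := by simpa only [smul_eq_mul] using hS hx hy hμ.le hν.le hμν
    have key := hf x hx _ hm y hy (by linear_combination ν * hxy.le - x * hμν)
      (by linear_combination μ * hxy.le + y * hμν) hxy
    rw [hμ', hν'] at key
    linarith

theorem StrictMonoOn.forall_le_le_lt_image_iff {α β : Type*} [LinearOrder α] [Preorder β]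
    {s : α → β} {I : Set α} (hs : StrictMonoOn s I) {P : β → β → β → Prop} :
    (∀ a ∈ s '' I, ∀ x ∈ s '' I, ∀ b ∈ s '' I, a ≤ x → x ≤ b → a < b → P a x b) ↔
      ∀ a ∈ I, ∀ x ∈ I, ∀ b ∈ I, a ≤ x → x ≤ b → a < b → P (s a) (s x) (s b) := by
  simp only [forall_mem_image]
  refine forall₂_congr fun a ha => forall₂_congr fun x hx => forall₂_congr fun b hb => ?_
  rw [hs.le_iff_le ha hx, hs.le_iff_le hx hb, hs.lt_iff_lt ha hb]

theorem isSTildeConcave_iff_concaveOn {l r : ℝ} (hlr : l ≤ r) {stilde φ f G : ℝ → ℝ}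
    (hsmono : StrictMonoOn stilde (Icc l r)) (hscont : ContinuousOn stilde (Icc l r))
    (hG : ∀ x ∈ Icc l r, G (stilde x) = f x / φ x) :
    IsSTildeConcave l r stilde φ f ↔ ConcaveOn ℝ (Icc (stilde l) (stilde r)) G := by
  rw [concaveOn_iff_secant_le (convex_Icc _ _),
    ← hscont.image_Icc_of_monotoneOn hlr hsmono.monotoneOn, hsmono.forall_le_le_lt_image_iff]
  refine forall₂_congr fun a ha => forall₂_congr fun x hx => forall₂_congr fun b hb => ?_
  rw [hG a ha, hG x hx, hG b hb]

theorem value_eq_phi_mul_concave_majorant_general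
    (l r : ℝ) (hlr : l < r)
    (φ stilde : ℝ → ℝ)
    (hφpos : ∀ x ∈ Set.Icc l r, 0 < φ x)
    (hscont : ContinuousOn stilde (Set.Icc l r))
    (hsmono : StrictMonoOn stilde (Set.Icc l r))
    (g V : ℝ → ℝ)
    -- `g̃ = (g/φ) ∘ s̃⁻¹` on `[s̃(l), s̃(r)]`
    (gtilde : ℝ → ℝ) (hgtilde : ∀ x ∈ Set.Icc l r, gtilde (stilde x) = g x / φ x)
    -- `W` is the smallest nonnegative concave majorant of `g̃` on `[s̃(l), s̃(r)]`
    (W : ℝ → ℝ)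
    (hWconc : ConcaveOn ℝ (Set.Icc (stilde l) (stilde r)) W)
    (hWnn : ∀ y ∈ Set.Icc (stilde l) (stilde r), 0 ≤ W y)
    (hWmaj : ∀ y ∈ Set.Icc (stilde l) (stilde r), gtilde y ≤ W y)
    (hWmin : ∀ W' : ℝ → ℝ, ConcaveOn ℝ (Set.Icc (stilde l) (stilde r)) W' →
      (∀ y ∈ Set.Icc (stilde l) (stilde r), 0 ≤ W' y) →
      (∀ y ∈ Set.Icc (stilde l) (stilde r), gtilde y ≤ W' y) →
      ∀ y ∈ Set.Icc (stilde l) (stilde r), W y ≤ W' y)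
    -- `V` is the minimal majorant of `g` on `[l,r]` such that `V/φ` is `s̃`-concave
    (hVnn : ∀ x ∈ Set.Icc l r, 0 ≤ V x)
    (hVmaj : ∀ x ∈ Set.Icc l r, g x ≤ V x)
    (hVconc : IsSTildeConcave l r stilde φ V)
    (hVmin : ∀ U : ℝ → ℝ, (∀ x ∈ Set.Icc l r, 0 ≤ U x) →
      (∀ x ∈ Set.Icc l r, g x ≤ U x) → IsSTildeConcave l r stilde φ U →
      ∀ x ∈ Set.Icc l r, V x ≤ U x) :
    ∀ x ∈ Set.Icc l r, V x = φ x * W (stilde x) := by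
  have himage := hscont.image_Icc_of_monotoneOn hlr.le hsmono.monotoneOn
  have hsmem : ∀ x ∈ Icc l r, stilde x ∈ Icc (stilde l) (stilde r) :=
    fun x hx => himage ▸ mem_image_of_mem stilde hx
  have hVle : ∀ x ∈ Icc l r, V x ≤ φ x * W (stilde x) := by
    refine hVmin _ (fun x hx => mul_nonneg (hφpos x hx).le (hWnn _ (hsmem x hx)))
      (fun x hx => ?_) ((isSTildeConcave_iff_concaveOn hlr.le hsmono hscont
        fun x hx => (mul_div_cancel_left₀ _ (hφpos x hx).ne').symm).2 hWconc)
    rw [← div_le_iff₀' (hφpos x hx), ← hgtilde x hx]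
    exact hWmaj _ (hsmem x hx)
  set σ := Function.invFunOn stilde (Icc l r)
  have hσ : ∀ x ∈ Icc l r, σ (stilde x) = x := fun x hx => hsmono.injOn.leftInvOn_invFunOn hx
  have hWle : ∀ y ∈ Icc (stilde l) (stilde r), W y ≤ V (σ y) / φ (σ y) := by
    refine hWmin _ ((isSTildeConcave_iff_concaveOn hlr.le hsmono hscont
      fun x hx => by rw [hσ x hx]).1 hVconc) ?_ ?_ <;> rw [← himage, forall_mem_image] <;>
      intro x hx <;> rw [hσ x hx]
    · exact div_nonneg (hVnn x hx) (hφpos x hx).le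
    · rw [hgtilde x hx]
      exact div_le_div_of_nonneg_right (hVmaj x hx) (hφpos x hx).le
  intro x hx
  refine (hVle x hx).antisymm ?_
  have := hWle _ (hsmem x hx)
  rwa [hσ x hx, le_div_iff₀' (hφpos x hx)] at this

/-- let `W` be the smallest nonnegative concave majorant of
`g̃ = (g/φ) ∘ s̃⁻¹` on `[s̃(l), s̃(r)]`, where `s̃ = ψ/φ` is continuous and strictly
increasing (`ψ` increasing, `φ` decreasing, both positive `α`-harmonic functions).
Then the value function `V` of the optimal stopping problem with killing rate `α` —
characterised as the minimal majorant of `g` such that `V/φ` is `s̃`-concave —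
satisfies `V(x) = φ(x)·W(s̃(x))` for all `x ∈ [l, r]`. -/
theorem value_eq_phi_mul_concave_majorant
    (l r : ℝ) (hlr : l < r) (α : ℝ) (hα : 0 < α)
    (ψ φ stilde : ℝ → ℝ)
    (hψpos : ∀ x ∈ Set.Icc l r, 0 < ψ x) (hφpos : ∀ x ∈ Set.Icc l r, 0 < φ x)
    (hψmono : MonotoneOn ψ (Set.Icc l r)) (hφanti : AntitoneOn φ (Set.Icc l r))
    (hstilde : ∀ x ∈ Set.Icc l r, stilde x = ψ x / φ x)
    (hscont : ContinuousOn stilde (Set.Icc l r))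
    (hsmono : StrictMonoOn stilde (Set.Icc l r))
    (g V : ℝ → ℝ)
    -- `g̃ = (g/φ) ∘ s̃⁻¹` on `[s̃(l), s̃(r)]`
    (gtilde : ℝ → ℝ) (hgtilde : ∀ x ∈ Set.Icc l r, gtilde (stilde x) = g x / φ x)
    -- `W` is the smallest nonnegative concave majorant of `g̃` on `[s̃(l), s̃(r)]`
    (W : ℝ → ℝ)
    (hWconc : ConcaveOn ℝ (Set.Icc (stilde l) (stilde r)) W)
    (hWnn : ∀ y ∈ Set.Icc (stilde l) (stilde r), 0 ≤ W y)
    (hWmaj : ∀ y ∈ Set.Icc (stilde l) (stilde r), gtilde y ≤ W y)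
    (hWmin : ∀ W' : ℝ → ℝ, ConcaveOn ℝ (Set.Icc (stilde l) (stilde r)) W' →
      (∀ y ∈ Set.Icc (stilde l) (stilde r), 0 ≤ W' y) →
      (∀ y ∈ Set.Icc (stilde l) (stilde r), gtilde y ≤ W' y) →
      ∀ y ∈ Set.Icc (stilde l) (stilde r), W y ≤ W' y)
    -- `V` is the minimal majorant of `g` on `[l,r]` such that `V/φ` is `s̃`-concave
    (hVnn : ∀ x ∈ Set.Icc l r, 0 ≤ V x)
    (hVmaj : ∀ x ∈ Set.Icc l r, g x ≤ V x)
    (hVconc : IsSTildeConcave l r stilde φ V)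
    (hVmin : ∀ U : ℝ → ℝ, (∀ x ∈ Set.Icc l r, 0 ≤ U x) →
      (∀ x ∈ Set.Icc l r, g x ≤ U x) → IsSTildeConcave l r stilde φ U →
      ∀ x ∈ Set.Icc l r, V x ≤ U x) :
    ∀ x ∈ Set.Icc l r, V x = φ x * W (stilde x) :=
  value_eq_phi_mul_concave_majorant_general l r hlr φ stilde hφpos hscont hsmono g V gtilde hgtilde
    W hWconc hWnn hWmaj hWmin hVnn hVmaj hVconc hVmin
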